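/- Let (M_i)_{i∈ℕ} and (λ_i)_{i∈ℕ} be sequences of positive real numbers such that ∑_{i=1}^∞ λ_i ≤ 1/2 and |M_{j+1}−M_j| ≤ (1+M_j)λ_j for all j∈ℕ. Then M_i ≤ 1+2M₁ for all i∈ℕ. -/
import Mathlib

open Finset

/-- **Algebraic iteration lemma.**  If `(M_i)` and `(λ_i)` are sequences of positive reals
with `∑_{i=1}^∞ λ_i ≤ 1/2` and `|M_{j+1} − M_j| ≤ (1 + M_j) λ_j` for all `j`, then
`M_i ≤ 1 + 2 M₁` for all `i`.  (Sequences are indexed by `ℕ`, the index `0` playing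
the role of the first index.) -/
theorem algebraic_iteration_lemma (M lam : ℕ → ℝ)
    (hMpos : ∀ i, 0 < M i) (hlampos : ∀ i, 0 < lam i)
    (hsum : ∀ N : ℕ, ∑ i ∈ Finset.range N, lam i ≤ 1 / 2)
    (hrec : ∀ j : ℕ, |M (j + 1) - M j| ≤ (1 + M j) * lam j) :
    ∀ i : ℕ, M i ≤ 1 + 2 * M 0 := by
  have key : ∀ i, (1 + M i) * (1 - ∑ j ∈ Finset.range i, lam j) ≤ 1 + M 0 := by
    intro i
    induction i with
    | zero => simp
    | succ n ih =>
      have h1 : M (n+1) ≤ M n + (1 + M n) * lam n := by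
        have h := abs_le.mp (hrec n); linarith [h.1, h.2]
      have hS : ∑ j ∈ Finset.range (n+1), lam j ≤ 1/2 := hsum (n+1)
      have hpos : 0 ≤ ∑ j ∈ Finset.range n, lam j :=
        Finset.sum_nonneg fun j _ => (hlampos j).le
      rw [Finset.sum_range_succ] at hS ⊢
      have hM := (hMpos n).le
      have hl := (hlampos n).le
      nlinarith [ih, mul_nonneg hl (mul_nonneg (by linarith : (0:ℝ) ≤ 1 + M n)
        (by linarith : (0:ℝ) ≤ ∑ j ∈ Finset.range n, lam j + lam n)),
        mul_le_mul_of_nonneg_right h1 (by linarith : (0:ℝ) ≤ 1 - (∑ j ∈ Finset.range n, lam j + lam n))]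
  intro i
  have hk := key i
  have hS := hsum i
  have hpos : 0 ≤ ∑ j ∈ Finset.range i, lam j :=
    Finset.sum_nonneg fun j _ => (hlampos j).le
  nlinarith [(hMpos i).le]
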